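/- Course-of-value recursion is derivable from induction for descriptions: for every D : Desc and P : Mu D → Type, given a step function that, for each d : ⟦D⟧(Mu D), produces P (con d) from the 'below' structure (giving P at every element strictly beneath con d, i.e., at all recursive descendants), there is a function ∀ x : Mu D, P x. -/
import Mathlib


inductive Desc : Type 1
  | var : Desc
  | unit : Desc
  | times : Desc → Desc → Desc
  | pi : (S : Type) → (S → Desc) → Desc
  | sigma : (S : Type) → (S → Desc) → Desc

def interp : Desc → Type → Type
  | .var, X => X
  | .unit, _ => PUnit
  | .times D₁ D₂, X => interp D₁ X × interp D₂ X
  | .pi S T, X => ∀ s : S, interp (T s) X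
  | .sigma S T, X => Σ s : S, interp (T s) X

def dmap : (D : Desc) → {X Y : Type} → (X → Y) → interp D X → interp D Y
  | .var, _, _, f, x => f x
  | .unit, _, _, _, _ => PUnit.unit
  | .times D₁ D₂, _, _, f, x => (dmap D₁ f x.1, dmap D₂ f x.2)
  | .pi _ T, _, _, f, g => fun s => dmap (T s) f (g s)
  | .sigma _ T, _, _, f, x => ⟨x.1, dmap (T x.1) f x.2⟩

def Pos : (D : Desc) → interp D PUnit → Type
  | .var, _ => PUnit
  | .unit, _ => Empty
  | .times D₁ D₂, x => Pos D₁ x.1 ⊕ Pos D₂ x.2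
  | .pi S T, g => Σ s : S, Pos (T s) (g s)
  | .sigma _ T, x => Pos (T x.1) x.2

def shapeOf (D : Desc) {X : Type} (x : interp D X) : interp D PUnit :=
  dmap D (fun _ => PUnit.unit) x

def payload : (D : Desc) → {X : Type} → (x : interp D X) → Pos D (shapeOf D x) → X
  | .var, _, x, _ => x
  | .unit, _, _, p => p.elim
  | .times D₁ D₂, _, x, p =>
      match p with
      | .inl p₁ => payload D₁ x.1 p₁
      | .inr p₂ => payload D₂ x.2 p₂
  | .pi _ T, _, g, p => payload (T p.1) (g p.1) p.2
  | .sigma _ T, _, x, p => payload (T x.1) x.2 p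

inductive Mu (D : Desc) : Type
  | sup : (s : interp D PUnit) → (Pos D s → Mu D) → Mu D

def con (D : Desc) (d : interp D (Mu D)) : Mu D :=
  Mu.sup (shapeOf D d) (payload D d)

/-- `All D P d` : the predicate `P` holds at every recursive position of `d`. -/
def All (D : Desc) {X : Type} (P : X → Type) (d : interp D X) : Type :=
  ∀ p : Pos D (shapeOf D d), P (payload D d p)

/-- `P` holds at every strict descendant of a `Mu` element. -/
def BelowMu {D : Desc} (P : Mu D → Type) : Mu D → Type
  | .sup s f => ∀ p : Pos D s, P (f p) × BelowMu P (f p)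

/-- The `below` structure at a subcode: `P` (together with `below`) at every
recursive position, i.e. at all recursive descendants. -/
def Below (D : Desc) (P : Mu D → Type) (D' : Desc) (d : interp D' (Mu D)) : Type :=
  ∀ p : Pos D' (shapeOf D' d), P (payload D' d p) × BelowMu P (payload D' d p)

/-- Course-of-value recursion is derivable from induction. -/
theorem cov_derivable (D : Desc)
    (ind : ∀ P : Mu D → Type,
      (∀ d : interp D (Mu D), All D P d → P (con D d)) → ∀ x : Mu D, P x)
    (P : Mu D → Type)
    (step : ∀ d : interp D (Mu D), Below D P D d → P (con D d)) :
    Nonempty (∀ x : Mu D, P x) := by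
  refine ⟨fun x => (ind (fun x => P x × BelowMu P x) (fun d h => ⟨step d h, h⟩) x).1⟩
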